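/- arXiv:1412.8705 — 6 statements merged into one kernel-verified Lean document; each statement's English description precedes it below -/
import Mathlib

section
/- Let p_1,...,p_s be pairwise coprime integers ≥ 2, r_1,...,r_s ≥ 1, and P = p_1^{r_1} ⋯ p_s^{r_s}. For each i let M_i be the inverse of P/p_i^{r_i} modulo p_i^{r_i}. Given digits x_{i,j} ∈ {0,...,p_i−1}, set ẋ_i = Σ_{1≤j≤r_i} x_{i,j} p_i^{j−1} and ẍ = Σ_{i=1}^s M_i (P/p_i^{r_i}) ẋ_i. Then for every n ∈ ℕ: φ_{p_i}(n) ∈ [[x_i]_{r_i}, [x_i]_{r_i} + p_i^{−r_i}) for all i = 1,...,s if and only if n ≡ ẍ (mod P). -/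
open scoped Classical

/-- Base-`p` radical inverse (van der Corput) of `n`. -/
noncomputable def radInv (p n : ℕ) : ℝ :=
  ∑ i ∈ Finset.range n, ((n / p ^ i % p : ℕ) : ℝ) / (p : ℝ) ^ (i + 1)

/-!
The radical inverse obeys `φ_p(n) = (n mod p + φ_p(⌊n / p⌋)) / p`, and the truncated expansion
`[x]_r` obeys the same recursion in its first digit. As `φ_p(⌊n / p⌋) < 1` and
`[x']_{r-1} + p^{-(r-1)} ≤ 1`, the condition `φ_p(n) ∈ [[x]_r, [x]_r + p^{-r})` forces
`n mod p = x_1` and reduces to the same condition for `⌊n / p⌋` and the remaining digits. Hence it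
holds exactly when the lowest `r` base-`p` digits of `n` are `x_1, …, x_r`, i.e. when
`n ≡ ẋ (mod p^r)`. Finally `ẍ ≡ ẋ_i (mod p_i^{r_i})` for every `i`, and the Chinese remainder
theorem for the pairwise coprime moduli `p_i^{r_i}` combines the `s` congruences into one modulo `P`.
-/

open Finset

theorem Finset.sum_Icc_one_eq_sum_range {M : Type*} [AddCommMonoid M] (f : ℕ → M) (r : ℕ) :
    ∑ j ∈ Icc 1 r, f j = ∑ i ∈ range r, f (i + 1) := by
  rw [← Ico_add_one_right_eq_Icc, range_eq_Ico, sum_Ico_add', zero_add]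

namespace Nat

theorem add_mul_eq_add_mul_iff {p a b c d : ℕ} (ha : a < p) (hc : c < p) :
    a + p * b = c + p * d ↔ a = c ∧ b = d := by
  constructor
  · intro h
    have hmod := congrArg (· % p) h
    have hdiv := congrArg (· / p) h
    have hp : 0 < p := by omega
    simp only [add_mul_mod_self_left, mod_eq_of_lt ha, mod_eq_of_lt hc] at hmod
    simp only [add_mul_div_left _ _ hp, div_eq_of_lt ha, div_eq_of_lt hc, zero_add] at hdiv
    exact ⟨hmod, hdiv⟩
  · rintro ⟨rfl, rfl⟩
    rfl

theorem mod_pow_succ_eq_add_mul_iff {p n r c m : ℕ} (hc : c < p) :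
    n % p ^ (r + 1) = c + p * m ↔ n % p = c ∧ n / p % p ^ r = m := by
  rw [pow_succ', mod_mul]
  exact add_mul_eq_add_mul_iff (mod_lt _ (by omega)) hc

theorem sum_range_mul_pow_succ (p : ℕ) (c : ℕ → ℕ) (r : ℕ) :
    ∑ i ∈ range (r + 1), c i * p ^ i = c 0 + p * ∑ i ∈ range r, c (i + 1) * p ^ i := by
  rw [sum_range_succ', mul_sum, pow_zero, mul_one, add_comm]
  exact congrArg _ (sum_congr rfl fun i _ => by ring)

theorem sum_range_mul_pow_lt {p r : ℕ} {c : ℕ → ℕ} (hc : ∀ i < r, c i < p) :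
    ∑ i ∈ range r, c i * p ^ i < p ^ r := by
  induction r generalizing c with
  | zero => simp
  | succ r ih =>
    have htail := ih fun i hi => hc (i + 1) (by omega)
    have h0 := hc 0 (by omega)
    rw [sum_range_mul_pow_succ, pow_succ']
    nlinarith

theorem sum_mul_prod_div_modEq {ι : Type*} [Fintype ι] {Q M : ι → ℕ}
    (hM : ∀ i, M i * ((∏ j, Q j) / Q i) ≡ 1 [MOD Q i]) (X : ι → ℕ) (i : ι) :
    ∑ j, M j * ((∏ k, Q k) / Q j) * X j ≡ X i [MOD Q i] := by
  classical
  have hmain : M i * ((∏ k, Q k) / Q i) * X i ≡ 1 * X i [MOD Q i] := (hM i).mul_right _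
  have hrest : ∑ j ∈ univ.erase i, M j * ((∏ k, Q k) / Q j) * X j ≡ 0 [MOD Q i] := by
    refine modEq_zero_iff_dvd.2 (dvd_sum fun j hj => Dvd.dvd.mul_right (Dvd.dvd.mul_left ?_ _) _)
    refine dvd_div_of_mul_dvd ?_
    rw [← prod_pair (ne_of_mem_erase hj)]
    exact prod_dvd_prod_of_subset _ _ _ (subset_univ _)
  rw [← add_sum_erase _ _ (mem_univ i)]
  simpa using hmain.add hrest

theorem modEq_prod_iff {ι : Type*} [Fintype ι] {Q : ι → ℕ} (hQ : Pairwise fun i j => Coprime (Q i) (Q j))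
    {a b : ℕ} : a ≡ b [MOD ∏ i, Q i] ↔ ∀ i, a ≡ b [MOD Q i] := by
  refine ⟨fun h i => h.of_dvd (dvd_prod_of_mem Q (mem_univ i)), fun h => ?_⟩
  rw [modEq_iff_dvd, cast_prod]
  exact Fintype.prod_dvd_of_coprime (fun i j hij => isCoprime_iff_coprime.2 (hQ hij))
    fun i => modEq_iff_dvd.1 (h i)

end Nat

/-- The paper's `[x]_r`, with digits `x_j = c (j - 1)`. -/
noncomputable def digitExpansion (p : ℕ) (c : ℕ → ℕ) (r : ℕ) : ℝ :=
  ∑ i ∈ range r, (c i : ℝ) / (p : ℝ) ^ (i + 1)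

section digitExpansion

variable {p : ℕ} {c : ℕ → ℕ} {r : ℕ}

theorem digitExpansion_nonneg : 0 ≤ digitExpansion p c r :=
  sum_nonneg fun _ _ => by positivity

theorem digitExpansion_succ (p : ℕ) (c : ℕ → ℕ) (r : ℕ) :
    digitExpansion p c (r + 1) = (c 0 + digitExpansion p (fun i => c (i + 1)) r) / p := by
  simp only [digitExpansion, sum_range_succ', add_div, sum_div, div_div, ← pow_succ]
  ring

theorem digitExpansion_le (hc : ∀ i < r, c i < p) :
    digitExpansion p c r ≤ 1 - ((p : ℝ) ^ r)⁻¹ := by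
  induction r generalizing c with
  | zero => simp [digitExpansion]
  | succ r ih =>
    have hc0 : ((c 0 : ℕ) : ℝ) + 1 ≤ p := by exact_mod_cast hc 0 (by omega)
    have htail := ih fun i hi => hc (i + 1) (by omega)
    have hp : (0 : ℝ) < p := by linarith [(c 0).cast_nonneg (α := ℝ)]
    rw [digitExpansion_succ, div_le_iff₀ hp]
    have hpow : (1 - ((p : ℝ) ^ (r + 1))⁻¹) * p = p - ((p : ℝ) ^ r)⁻¹ := by
      field_simp
      ring
    linarith

end digitExpansion

theorem natCast_add_le_and_lt_iff {a b : ℕ} {s t q : ℝ} (hs : 0 ≤ s) (ht : 0 ≤ t) (ht1 : t < 1)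
    (hsq : s + q ≤ 1) : (b + s ≤ a + t ∧ a + t < b + s + q) ↔ a = b ∧ s ≤ t ∧ t < s + q := by
  constructor
  · rintro ⟨hlo, hhi⟩
    have hba : b < a + 1 := by exact_mod_cast (by linarith : (b : ℝ) < a + 1)
    have hab : a < b + 1 := by exact_mod_cast (by linarith : (a : ℝ) < b + 1)
    obtain rfl : a = b := by omega
    exact ⟨rfl, by linarith, by linarith⟩
  · rintro ⟨rfl, hlo, hhi⟩
    constructor <;> linarith

section radInv

variable {p : ℕ}

theorem radInv_eq_digitExpansion_of_le (hp : 2 ≤ p) {n N : ℕ} (h : n ≤ N) :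
    radInv p n = digitExpansion p (fun i => n / p ^ i % p) N := by
  refine sum_subset (range_subset_range.2 h) fun i _ hi => ?_
  have hlt : n < p ^ i := (not_lt.1 (mt mem_range.2 hi)).trans_lt (Nat.lt_pow_self hp)
  simp [Nat.div_eq_of_lt hlt]

theorem radInv_nonneg (p n : ℕ) : 0 ≤ radInv p n := digitExpansion_nonneg

theorem radInv_lt_one (hp : 2 ≤ p) (n : ℕ) : radInv p n < 1 :=
  (digitExpansion_le fun _ _ => Nat.mod_lt _ (by omega)).trans_lt
    (sub_lt_self 1 (by positivity))

theorem radInv_eq_div (hp : 2 ≤ p) (n : ℕ) :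
    radInv p n = (((n % p : ℕ) : ℝ) + radInv p (n / p)) / p := by
  cases n with
  | zero => simp [radInv]
  | succ m =>
    have hle : (m + 1) / p ≤ m := Nat.lt_succ_iff.1 (Nat.div_lt_self m.succ_pos (by omega))
    rw [radInv_eq_digitExpansion_of_le hp hle]
    refine (digitExpansion_succ p (fun i => (m + 1) / p ^ i % p) m).trans ?_
    simp [Nat.div_div_eq_div_mul, ← pow_succ']

theorem digitExpansion_le_radInv_and_lt_iff (hp : 2 ≤ p) {r : ℕ} {c : ℕ → ℕ}
    (hc : ∀ i < r, c i < p) (n : ℕ) :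
    digitExpansion p c r ≤ radInv p n ∧ radInv p n < digitExpansion p c r + ((p : ℝ) ^ r)⁻¹ ↔
      n % p ^ r = ∑ i ∈ range r, c i * p ^ i := by
  induction r generalizing n c with
  | zero => simp [digitExpansion, radInv_nonneg, radInv_lt_one hp, Nat.mod_one]
  | succ r ih =>
    have hc' : ∀ i < r, c (i + 1) < p := fun i hi => hc (i + 1) (by omega)
    have hpos : (0 : ℝ) < p := by positivity
    rw [Nat.sum_range_mul_pow_succ, Nat.mod_pow_succ_eq_add_mul_iff (hc 0 (by omega)),
      ← ih hc', digitExpansion_succ, radInv_eq_div hp, pow_succ, mul_inv, ← div_eq_mul_inv _ (p : ℝ),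
      ← add_div, div_le_div_iff_of_pos_right hpos, div_lt_div_iff_of_pos_right hpos]
    refine natCast_add_le_and_lt_iff digitExpansion_nonneg (radInv_nonneg p _)
      (radInv_lt_one hp _) ?_
    linarith [digitExpansion_le hc']

theorem le_radInv_and_lt_iff_modEq (hp : 2 ≤ p) {r : ℕ} {x : ℕ → ℕ}
    (hx : ∀ j, 1 ≤ j → j ≤ r → x j < p) (n : ℕ) :
    ((∑ j ∈ Icc 1 r, (x j : ℝ) / (p : ℝ) ^ j) ≤ radInv p n ∧
        radInv p n < (∑ j ∈ Icc 1 r, (x j : ℝ) / (p : ℝ) ^ j) + ((p : ℝ) ^ r)⁻¹) ↔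
      n ≡ ∑ j ∈ Icc 1 r, x j * p ^ (j - 1) [MOD p ^ r] := by
  have hc : ∀ i < r, x (i + 1) < p := fun i hi => hx (i + 1) (by omega) hi
  simp only [sum_Icc_one_eq_sum_range, add_tsub_cancel_right]
  rw [Nat.ModEq, Nat.mod_eq_of_lt (Nat.sum_range_mul_pow_lt hc)]
  exact digitExpansion_le_radInv_and_lt_iff hp hc n

end radInv

theorem stmt1_general (s : ℕ) (p r M : Fin s → ℕ)
    (hp : ∀ i, 2 ≤ p i) (hco : ∀ i j, i ≠ j → Nat.Coprime (p i) (p j))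
    (P : ℕ) (hP : P = ∏ i, p i ^ r i)
    (hM : ∀ i, M i * (P / p i ^ r i) ≡ 1 [MOD p i ^ r i])
    (x : Fin s → ℕ → ℕ) (hx : ∀ i j, 1 ≤ j → j ≤ r i → x i j < p i)
    (n : ℕ) :
    (∀ i, (∑ j ∈ Finset.Icc 1 (r i), (x i j : ℝ) / (p i : ℝ) ^ j) ≤ radInv (p i) n ∧
        radInv (p i) n <
          (∑ j ∈ Finset.Icc 1 (r i), (x i j : ℝ) / (p i : ℝ) ^ j) + ((p i : ℝ) ^ r i)⁻¹) ↔
    n ≡ ∑ i, M i * (P / p i ^ r i) *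
        (∑ j ∈ Finset.Icc 1 (r i), x i j * p i ^ (j - 1)) [MOD P] := by
  subst hP
  rw [Nat.modEq_prod_iff fun i j hij => (hco i j hij).pow _ _]
  refine forall_congr' fun i => ?_
  have hcrt := Nat.sum_mul_prod_div_modEq hM (fun i => ∑ j ∈ Icc 1 (r i), x i j * p i ^ (j - 1)) i
  rw [le_radInv_and_lt_iff_modEq (hp i) (hx i)]
  exact ⟨fun h => h.trans hcrt.symm, fun h => h.trans hcrt⟩

theorem stmt1 (s : ℕ) (hs : 1 ≤ s) (p r M : Fin s → ℕ)
    (hp : ∀ i, 2 ≤ p i) (hco : ∀ i j, i ≠ j → Nat.Coprime (p i) (p j))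
    (hr : ∀ i, 1 ≤ r i)
    (P : ℕ) (hP : P = ∏ i, p i ^ r i)
    (hM : ∀ i, M i * (P / p i ^ r i) ≡ 1 [MOD p i ^ r i])
    (x : Fin s → ℕ → ℕ) (hx : ∀ i j, 1 ≤ j → j ≤ r i → x i j < p i)
    (n : ℕ) :
    (∀ i, (∑ j ∈ Finset.Icc 1 (r i), (x i j : ℝ) / (p i : ℝ) ^ j) ≤ radInv (p i) n ∧
        radInv (p i) n <
          (∑ j ∈ Finset.Icc 1 (r i), (x i j : ℝ) / (p i : ℝ) ^ j) + ((p i : ℝ) ^ r i)⁻¹) ↔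
    n ≡ ∑ i, M i * (P / p i ^ r i) *
        (∑ j ∈ Finset.Icc 1 (r i), x i j * p i ^ (j - 1)) [MOD P] :=
  stmt1_general s p r M hp hco P hP hM x hx n
end

section
/- Let p_1,...,p_s be pairwise coprime integers ≥ 2, and for each i let τ_i be the multiplicative order condition p_j^{τ_j} ≡ 1 (mod p_i) for all i ≠ j. Let k_1,...,k_s ≥ 1, P = p_1^{τ_1 k_1} ⋯ p_s^{τ_s k_s}, and M_i the inverse of P/p_i^{τ_i k_i} modulo p_i^{τ_i k_i}. Then M_i ≡ 1 (mod p_i) for each i = 1,...,s. -/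
open Finset

theorem Nat.ModEq.modEq_one_of_mul_modEq_one {a b n : ℕ} (hab : a * b ≡ 1 [MOD n])
    (hb : b ≡ 1 [MOD n]) : a ≡ 1 [MOD n] :=
  calc a = a * 1 := (mul_one a).symm
    _ ≡ a * b [MOD n] := hb.symm.mul_left a
    _ ≡ 1 [MOD n] := hab

theorem prod_erase_pow_mul_modEq_one {ι : Type*} [DecidableEq ι] (s : Finset ι) (i : ι)
    (p τ k : ι → ℕ) (n : ℕ) (hτ : ∀ j, j ≠ i → p j ^ τ j ≡ 1 [MOD n]) :
    ∏ j ∈ s.erase i, p j ^ (τ j * k j) ≡ 1 [MOD n] :=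
  Nat.ModEq.prod_one fun j hj => by
    simpa only [pow_mul, one_pow] using (hτ j (ne_of_mem_erase hj)).pow (k j)

theorem prod_pow_div_pow_eq_prod_erase {ι : Type*} [Fintype ι] [DecidableEq ι] (p e : ι → ℕ)
    (i : ι) (hpi : 0 < p i) :
    (∏ j, p j ^ e j) / p i ^ e i = ∏ j ∈ univ.erase i, p j ^ e j := by
  rw [← mul_prod_erase _ _ (mem_univ i), Nat.mul_div_cancel_left _ (pow_pos hpi _)]

theorem stmt3_general (s : ℕ) (p τ k M : Fin s → ℕ)
    (hp : ∀ i, 2 ≤ p i)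
    (hτ1 : ∀ i, 1 ≤ τ i)
    (hτ : ∀ i j, i ≠ j → p j ^ τ j ≡ 1 [MOD p i])
    (hk : ∀ i, 1 ≤ k i)
    (P : ℕ) (hP : P = ∏ i, p i ^ (τ i * k i))
    (hM : ∀ i, M i * (P / p i ^ (τ i * k i)) ≡ 1 [MOD p i ^ (τ i * k i)]) :
    ∀ i, M i ≡ 1 [MOD p i] := by
  intro i
  have hMQ := (hM i).of_dvd (dvd_pow_self (p i) (Nat.mul_pos (hτ1 i) (hk i)).ne')
  rw [hP, prod_pow_div_pow_eq_prod_erase p (fun j => τ j * k j) i (by linarith [hp i])] at hMQ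
  exact hMQ.modEq_one_of_mul_modEq_one
    (prod_erase_pow_mul_modEq_one univ i p τ k (p i) fun j hji => hτ i j hji.symm)

theorem stmt3 (s : ℕ) (hs : 1 ≤ s) (p τ k M : Fin s → ℕ)
    (hp : ∀ i, 2 ≤ p i) (hco : ∀ i j, i ≠ j → Nat.Coprime (p i) (p j))
    (hτ1 : ∀ i, 1 ≤ τ i)
    (hτ : ∀ i j, i ≠ j → p j ^ τ j ≡ 1 [MOD p i])
    (hk : ∀ i, 1 ≤ k i)
    (P : ℕ) (hP : P = ∏ i, p i ^ (τ i * k i))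
    (hM : ∀ i, M i * (P / p i ^ (τ i * k i)) ≡ 1 [MOD p i ^ (τ i * k i)]) :
    ∀ i, M i ≡ 1 [MOD p i] :=
  stmt3_general s p τ k M hp hτ1 hτ hk P hP hM
end

section
/- Let p_1,...,p_s be pairwise coprime integers ≥ 2 with s ≥ 2. Then 1/p_1 + 1/p_2 + ⋯ + 1/p_s is not congruent to 1/2 modulo 1; i.e., 2(p_0/p_1 + ⋯ + p_0/p_s) ≢ p_0 (mod 2p_0), where p_0 = p_1⋯p_s. -/
/-!
Modulo `p j`, every term `p₀ / p i` with `i ≠ j` vanishes, so the congruence reduced mod `p j`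
says `p j ∣ 2 · (p₀ / p j)`. As `p₀ / p j` is coprime to `p j`, this forces `p j ∣ 2`, i.e.
`p j = 2` for every `j`, which is impossible for two coprime entries.
-/

open Finset

namespace Nat

variable {ι : Type*} [Fintype ι] [DecidableEq ι] {p : ι → ℕ}

theorem prod_div_eq_prod_erase {i : ι} (hi : 0 < p i) :
    (∏ k, p k) / p i = ∏ k ∈ univ.erase i, p k :=
  Nat.div_eq_of_eq_mul_right hi (mul_prod_erase _ _ (mem_univ i)).symm

theorem dvd_prod_div_of_ne {i j : ι} (hi : 0 < p i) (hij : i ≠ j) :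
    p j ∣ (∏ k, p k) / p i := by
  rw [prod_div_eq_prod_erase hi]
  exact dvd_prod_of_mem p (mem_erase.mpr ⟨hij.symm, mem_univ j⟩)

theorem coprime_prod_div (hco : Pairwise fun i j ↦ Coprime (p i) (p j)) {j : ι}
    (hj : 0 < p j) : Coprime (p j) ((∏ k, p k) / p j) := by
  rw [prod_div_eq_prod_erase hj]
  exact Coprime.prod_right fun k hk ↦ hco (ne_of_mem_erase hk).symm

theorem sum_prod_div_modEq (hpos : ∀ i, 0 < p i) (j : ι) :
    ∑ i, (∏ k, p k) / p i ≡ (∏ k, p k) / p j [MOD p j] := by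
  rw [← add_sum_erase _ _ (mem_univ j)]
  conv_rhs => rw [← add_zero ((∏ k, p k) / p j)]
  refine ModEq.add_left _ ((modEq_zero_iff_dvd).mpr ?_)
  exact dvd_sum fun i hi ↦ dvd_prod_div_of_ne (hpos i) (ne_of_mem_erase hi)

theorem dvd_of_dvd_mul_sum_prod_div (hpos : ∀ i, 0 < p i)
    (hco : Pairwise fun i j ↦ Coprime (p i) (p j)) {a : ℕ} {j : ι}
    (h : p j ∣ a * ∑ i, (∏ k, p k) / p i) : p j ∣ a := by
  have hmod : a * ∑ i, (∏ k, p k) / p i ≡ a * ((∏ k, p k) / p j) [MOD p j] :=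
    (sum_prod_div_modEq hpos j).mul_left a
  have : p j ∣ a * ((∏ k, p k) / p j) := (hmod.dvd_iff dvd_rfl).mp h
  exact (coprime_prod_div hco (hpos j)).dvd_of_dvd_mul_right this

end Nat

theorem stmt4 (s : ℕ) (hs : 2 ≤ s) (p : Fin s → ℕ)
    (hp : ∀ i, 2 ≤ p i) (hco : ∀ i j, i ≠ j → Nat.Coprime (p i) (p j)) :
    ¬ (2 * ∑ i, (∏ j, p j) / p i ≡ (∏ j, p j) [MOD 2 * ∏ j, p j]) := by
  intro h
  have hpos : ∀ i, 0 < p i := fun i ↦ by linarith [hp i]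
  have eq_two : ∀ j, p j = 2 := fun j ↦ by
    have hP : p j ∣ ∏ k, p k := dvd_prod_of_mem p (mem_univ j)
    have hj := (h.of_dvd (hP.mul_left 2)).dvd_iff dvd_rfl |>.mpr hP
    exact le_antisymm (Nat.le_of_dvd two_pos (Nat.dvd_of_dvd_mul_sum_prod_div hpos hco hj)) (hp j)
  have h01 : (⟨0, by omega⟩ : Fin s) ≠ ⟨1, by omega⟩ := by simp
  simpa [eq_two] using hco _ _ h01
end

section
/- Let p_1,...,p_s be pairwise coprime integers ≥ 2 with s ≥ 2, p_0 = p_1⋯p_s, and β = 1/p_1 + ⋯ + 1/p_s. Then |1/2 − {−β}| ≥ 1/(2p_0), where {x} denotes the fractional part of x. -/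
/-!
Clearing denominators, `β = Q / p₀` with `Q = ∑ᵢ p₀ / pᵢ`, so `{-β} = m / p₀` for an integer
`0 ≤ m < p₀` and `|1/2 - {-β}| = |p₀ - 2m| / (2p₀)`. The numerator is a nonzero integer unless
`p₀ ∣ 2Q`. But `Q ≡ p₀ / pᵢ (mod pᵢ)` is a unit mod `pᵢ`, so `pᵢ ∣ 2Q` forces `pᵢ ∣ 2`; two
coprime integers `≥ 2` cannot both divide `2`.
-/

open Finset

lemma one_div_two_mul_le_abs_half_sub_fract_div (a : ℤ) {n : ℕ} (hn : 0 < n)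
    (h : ¬ (n : ℤ) ∣ 2 * a) :
    1 / (2 * n : ℝ) ≤ |1 / 2 - Int.fract (a / n : ℝ)| := by
  rw [Int.fract_div_intCast_eq_div_intCast_mod]
  have hm : (n : ℤ) - 2 * (a % n) ≠ 0 := by
    intro hnm
    exact h ⟨1 + 2 * (a / n), by linarith [Int.emod_add_mul_ediv a n]⟩
  have hnR : (0 : ℝ) < n := by exact_mod_cast hn
  have hsplit : 1 / 2 - ((a % n : ℤ) : ℝ) / n = ((n - 2 * (a % n) : ℤ) : ℝ) / (2 * n) := by
    push_cast
    field_simp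
  rw [hsplit, abs_div, abs_of_pos (by positivity : (0 : ℝ) < 2 * n), ← Int.cast_abs]
  gcongr
  exact_mod_cast Int.one_le_abs hm

lemma sum_one_div_eq_sum_prod_erase_div_prod {ι K : Type*} [Fintype ι] [DecidableEq ι] [Field K]
    {p : ι → K} (hp : ∀ i, p i ≠ 0) :
    ∑ i, 1 / p i = (∑ i, ∏ j ∈ univ.erase i, p j) / ∏ i, p i := by
  rw [sum_div]
  refine sum_congr rfl fun i _ => ?_
  have hrest : ∏ j ∈ univ.erase i, p j ≠ 0 := prod_ne_zero_iff.mpr fun j _ => hp j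
  rw [← mul_prod_erase univ p (mem_univ i)]
  field_simp

lemma Nat.dvd_of_dvd_mul_sum_prod_erase {ι : Type*} [Fintype ι] [DecidableEq ι] {p : ι → ℕ}
    (hco : Pairwise fun i j => Nat.Coprime (p i) (p j)) {k : ℕ} {i : ι}
    (h : p i ∣ k * ∑ j, ∏ l ∈ univ.erase j, p l) : p i ∣ k := by
  have hrest : p i ∣ k * ∑ j ∈ univ.erase i, ∏ l ∈ univ.erase j, p l :=
    Dvd.dvd.mul_left (dvd_sum fun j hj =>
      dvd_prod_of_mem _ (mem_erase.mpr ⟨(ne_of_mem_erase hj).symm, mem_univ i⟩)) k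
  rw [← add_sum_erase univ _ (mem_univ i), mul_add] at h
  have hcop : (p i).Coprime (∏ l ∈ univ.erase i, p l) :=
    Nat.Coprime.prod_right fun l hl => hco (ne_of_mem_erase hl).symm
  exact hcop.dvd_of_dvd_mul_right ((Nat.dvd_add_left hrest).mp h)

lemma Nat.not_prod_dvd_two_mul_sum_prod_erase {ι : Type*} [Fintype ι] [DecidableEq ι]
    {p : ι → ℕ} (hco : Pairwise fun i j => Nat.Coprime (p i) (p j)) {i j : ι} (hij : i ≠ j)
    (hi : 2 ≤ p i) (hj : 2 ≤ p j) :
    ¬ ∏ l, p l ∣ 2 * ∑ l, ∏ m ∈ univ.erase l, p m := by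
  intro h
  have hdvd : ∀ l, p l ∣ 2 := fun l =>
    Nat.dvd_of_dvd_mul_sum_prod_erase hco ((dvd_prod_of_mem p (mem_univ l)).trans h)
  have hi2 : p i = 2 := le_antisymm (Nat.le_of_dvd two_pos (hdvd i)) hi
  have hj2 : p j = 2 := le_antisymm (Nat.le_of_dvd two_pos (hdvd j)) hj
  simpa [hi2, hj2] using hco hij

theorem stmt5 (s : ℕ) (hs : 2 ≤ s) (p : Fin s → ℕ)
    (hp : ∀ i, 2 ≤ p i) (hco : ∀ i j, i ≠ j → Nat.Coprime (p i) (p j)) :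
    1 / (2 * ∏ i, (p i : ℝ)) ≤ |1 / 2 - Int.fract (- ∑ i, 1 / (p i : ℝ))| := by
  set Q : ℕ := ∑ i, ∏ j ∈ univ.erase i, p j
  have hp0 : ∀ i, (p i : ℝ) ≠ 0 := fun i => by have := hp i; positivity
  have hβ : -∑ i, 1 / (p i : ℝ) = ((-Q : ℤ) : ℝ) / ((∏ i, p i : ℕ) : ℝ) := by
    rw [sum_one_div_eq_sum_prod_erase_div_prod hp0]
    push_cast [Q]
    ring
  have hndvd : ¬ ((∏ i, p i : ℕ) : ℤ) ∣ 2 * -Q := by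
    rw [mul_neg, dvd_neg]
    exact_mod_cast Nat.not_prod_dvd_two_mul_sum_prod_erase (fun i j => hco i j)
      (i := ⟨0, by omega⟩) (j := ⟨1, by omega⟩) (by simp) (hp _) (hp _)
  have hpos : 0 < ∏ i, p i := prod_pos fun i _ => by have := hp i; omega
  have hbound := one_div_two_mul_le_abs_half_sub_fract_div _ hpos hndvd
  rw [hβ]
  push_cast at hbound ⊢
  exact hbound
end

section
/- Suppose p_0 = p_1⋯p_s is even, say p_ν is even for some ν. If b_1 = p_0(p_ν/2 − 1)/p_ν and b_2 = Σ_{i≠ν} p_0/p_i satisfy b_1 ≡ b_2 (mod p_0), then a contradiction arises: for any j ≠ ν, b_1 ≡ 0 (mod p_j) while b_2 ≢ 0 (mod p_j). Formally: for pairwise coprime p_1,...,p_s ≥ 2 with s ≥ 2 and p_ν even, p_0(p_ν/2 − 1)/p_ν ≢ Σ_{i≠ν} p_0/p_i (mod p_0). -/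
/-!
Fix `j ≠ ν`. Every term `p₀ / pᵢ` with `i ≠ j` is divisible by `p_j`, so `b₁ = (p₀ / p_ν) · (p_ν / 2 - 1)`
is `0` and `b₂` is `p₀ / p_j` modulo `p_j`. Since `p_j` is coprime to `p₀ / p_j = ∏_{k ≠ j} p_k` and
`p_j ≠ 1`, it does not divide `p₀ / p_j`, so `b₁ ≢ b₂` modulo `p_j`, hence modulo `p₀`.
-/

open Finset Function

variable {ι : Type*} [Fintype ι] [DecidableEq ι]

theorem Nat.prod_div_eq_prod_erase_s6 (p : ι → ℕ) {i : ι} (hi : p i ≠ 0) :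
    (∏ k, p k) / p i = ∏ k ∈ univ.erase i, p k := by
  rw [← mul_prod_erase univ p (mem_univ i)]
  exact Nat.mul_div_cancel_left _ (Nat.pos_of_ne_zero hi)

theorem Nat.dvd_prod_div_of_ne_s6 (p : ι → ℕ) {i j : ι} (hij : i ≠ j) : p j ∣ (∏ k, p k) / p i := by
  rcases eq_or_ne (p i) 0 with hi | hi
  · simp [hi]
  · rw [Nat.prod_div_eq_prod_erase_s6 p hi]
    exact dvd_prod_of_mem p (mem_erase.mpr ⟨hij.symm, mem_univ j⟩)

theorem Nat.not_dvd_prod_div_self {p : ι → ℕ} (hco : Pairwise (Nat.Coprime on p)) {j : ι}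
    (hj : 1 < p j) : ¬ p j ∣ (∏ k, p k) / p j := by
  rw [Nat.prod_div_eq_prod_erase_s6 p (by omega)]
  intro hdvd
  have hcop : Nat.Coprime (p j) (∏ k ∈ univ.erase j, p k) :=
    Nat.Coprime.prod_right fun k hk => hco (mem_erase.mp hk).1.symm
  exact hj.ne' (hcop.eq_one_of_dvd hdvd)

theorem Nat.not_dvd_sum_prod_div {p : ι → ℕ} (hco : Pairwise (Nat.Coprime on p)) {t : Finset ι}
    {j : ι} (hjt : j ∈ t) (hj : 1 < p j) : ¬ p j ∣ ∑ i ∈ t, (∏ k, p k) / p i := by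
  have hrest : p j ∣ ∑ i ∈ t.erase j, (∏ k, p k) / p i :=
    dvd_sum fun i hi => Nat.dvd_prod_div_of_ne_s6 p (mem_erase.mp hi).1
  rw [← add_sum_erase t _ hjt, Nat.dvd_add_left hrest]
  exact Nat.not_dvd_prod_div_self hco hj

theorem stmt6_general (s : ℕ) (hs : 2 ≤ s) (p : Fin s → ℕ)
    (hp : ∀ i, 2 ≤ p i) (hco : ∀ i j, i ≠ j → Nat.Coprime (p i) (p j))
    (ν : Fin s) :
    ¬ ((∏ i, p i) / p ν * (p ν / 2 - 1) ≡
        ∑ i ∈ Finset.univ.erase ν, (∏ j, p j) / p i [MOD ∏ i, p i]) := by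
  intro h
  obtain ⟨j, hj⟩ : ∃ j, j ≠ ν := Fintype.exists_ne_of_one_lt_card (by simp; omega) ν
  have hb₁ : p j ∣ (∏ i, p i) / p ν * (p ν / 2 - 1) :=
    (Nat.dvd_prod_div_of_ne_s6 p hj.symm).mul_right _
  have hb₂ : ¬ p j ∣ ∑ i ∈ univ.erase ν, (∏ k, p k) / p i :=
    Nat.not_dvd_sum_prod_div (fun i k => hco i k) (mem_erase.mpr ⟨hj, mem_univ j⟩) (hp j)
  exact hb₂ ((h.dvd_iff (dvd_prod_of_mem p (mem_univ j))).mp hb₁)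

theorem stmt6 (s : ℕ) (hs : 2 ≤ s) (p : Fin s → ℕ)
    (hp : ∀ i, 2 ≤ p i) (hco : ∀ i j, i ≠ j → Nat.Coprime (p i) (p j))
    (ν : Fin s) (hν : 2 ∣ p ν) :
    ¬ ((∏ i, p i) / p ν * (p ν / 2 - 1) ≡
        ∑ i ∈ Finset.univ.erase ν, (∏ j, p j) / p i [MOD ∏ i, p i]) :=
  stmt6_general s hs p hp hco ν
end

section
/- Let p_1,...,p_s be pairwise coprime integers ≥ 2 with s ≥ 2, p_0 = p_1⋯p_s, and suppose A ∈ [0, P) is the unique residue with A ≡ −Σ_{i=1}^s M_i (P/p_i) (mod P), where P = p_1^{τ_1 k_1}⋯p_s^{τ_s k_s} and each M_i ≡ 1 (mod p_i) is the inverse of P/p_i^{τ_i k_i} mod p_i^{τ_i k_i}. Then A/P ≡ −(1/p_1 + ⋯ + 1/p_s) (mod 1), i.e., A/P = {−(1/p_1 + ⋯ + 1/p_s)}. -/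
/-!
Writing `d i = P / p i`, the congruence for `A` says `A / P` and `-∑ M i * d i / P = -∑ M i / p i`
differ by an integer, and since `M i ≡ 1 [MOD p i]` each `M i / p i` differs from `1 / p i` by an
integer. As `0 ≤ A < P`, `A / P` is its own fractional part.
-/

theorem Int.ModEq.exists_div_sub_div_eq_intCast {K : Type*} [Field K] [CharZero K]
    {n a b : ℤ} (h : a ≡ b [ZMOD n]) : ∃ z : ℤ, (a : K) / n - b / n = z := by
  rcases eq_or_ne n 0 with rfl | hn
  · exact ⟨0, by rw [Int.modEq_zero_iff.mp h, sub_self, Int.cast_zero]⟩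
  obtain ⟨c, hc⟩ := h.symm.dvd
  refine ⟨c, ?_⟩
  rw [← sub_div, ← Int.cast_sub, hc, Int.cast_mul, mul_div_cancel_left₀ _ (Int.cast_ne_zero.mpr hn)]

theorem Int.fract_sum_div_eq_of_modEq {K ι : Type*} [Field K] [LinearOrder K] [IsOrderedRing K]
    [FloorRing K] {s : Finset ι} {n a b : ι → ℤ} (h : ∀ i ∈ s, a i ≡ b i [ZMOD n i]) :
    Int.fract (∑ i ∈ s, (a i : K) / n i) = Int.fract (∑ i ∈ s, (b i : K) / n i) := by
  choose! z hz using fun i hi => (h i hi).exists_div_sub_div_eq_intCast (K := K)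
  refine Int.fract_eq_fract.mpr ⟨∑ i ∈ s, z i, ?_⟩
  rw [← Finset.sum_sub_distrib, Int.cast_sum]
  exact Finset.sum_congr rfl hz

theorem Int.cast_ediv_div_self {K : Type*} [Field K] [CharZero K] {m n : ℤ} (hmn : m ∣ n)
    (hn : n ≠ 0) : ((n / m : ℤ) : K) / n = 1 / m := by
  obtain ⟨c, rfl⟩ := hmn
  have hm : m ≠ 0 := left_ne_zero_of_mul hn
  have hc : c ≠ 0 := right_ne_zero_of_mul hn
  rw [Int.mul_ediv_cancel_left _ hm]
  push_cast
  field_simp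

theorem stmt9_general (s : ℕ) (p τ k M : Fin s → ℕ)
    (hp : ∀ i, 2 ≤ p i)
    (hτ : ∀ i, 1 ≤ τ i) (hk : ∀ i, 1 ≤ k i)
    (P : ℕ) (hP : P = ∏ i, p i ^ (τ i * k i))
    (hM1 : ∀ i, M i ≡ 1 [MOD p i])
    (A : ℕ) (hA : A < P)
    (hAc : (A : ℤ) ≡ - ∑ i, (M i : ℤ) * ((P : ℤ) / p i) [ZMOD (P : ℤ)]) :
    (A : ℝ) / P = Int.fract (- ∑ i, 1 / (p i : ℝ)) := by
  have hP0 : (P : ℤ) ≠ 0 := by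
    rw [hP, Nat.cast_ne_zero, Finset.prod_ne_zero_iff]
    exact fun i _ => pow_ne_zero _ (by linarith [hp i])
  have hpP : ∀ i, (p i : ℤ) ∣ P := fun i => by
    rw [hP, Int.natCast_dvd_natCast]
    exact (dvd_pow_self _ (Nat.mul_ne_zero (by linarith [hτ i]) (by linarith [hk i]))).trans
      (Finset.dvd_prod_of_mem _ (Finset.mem_univ i))
  have hsum : (((- ∑ i, (M i : ℤ) * ((P : ℤ) / p i) : ℤ) : ℝ) / (P : ℤ))
      = ∑ i, ((-M i : ℤ) : ℝ) / (p i : ℤ) := by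
    simp only [Int.cast_neg, Int.cast_sum, Int.cast_mul, neg_div, Finset.sum_div,
      ← Finset.sum_neg_distrib, mul_div_assoc, Int.cast_ediv_div_self (hpP _) hP0, mul_one_div]
  calc (A : ℝ) / P = Int.fract ((A : ℝ) / P) := by
        rw [Int.fract_div_natCast_eq_div_natCast_mod, Nat.mod_eq_of_lt hA]
    _ = Int.fract (∑ i, ((-M i : ℤ) : ℝ) / (p i : ℤ)) := by
        rw [← hsum]
        exact Int.fract_eq_fract.mpr (hAc.exists_div_sub_div_eq_intCast (K := ℝ))
    _ = Int.fract (∑ i, ((-1 : ℤ) : ℝ) / (p i : ℤ)) :=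
        Int.fract_sum_div_eq_of_modEq fun i _ => (Int.natCast_modEq_iff.mpr (hM1 i)).neg
    _ = Int.fract (- ∑ i, 1 / (p i : ℝ)) := by
        simp only [Int.cast_neg, Int.cast_one, neg_div, Finset.sum_neg_distrib, Int.cast_natCast]

theorem stmt9 (s : ℕ) (hs : 2 ≤ s) (p τ k M : Fin s → ℕ)
    (hp : ∀ i, 2 ≤ p i) (hco : ∀ i j, i ≠ j → Nat.Coprime (p i) (p j))
    (hτ : ∀ i, 1 ≤ τ i) (hk : ∀ i, 1 ≤ k i)
    (P : ℕ) (hP : P = ∏ i, p i ^ (τ i * k i))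
    (hM : ∀ i, M i * (P / p i ^ (τ i * k i)) ≡ 1 [MOD p i ^ (τ i * k i)])
    (hM1 : ∀ i, M i ≡ 1 [MOD p i])
    (A : ℕ) (hA : A < P)
    (hAc : (A : ℤ) ≡ - ∑ i, (M i : ℤ) * ((P : ℤ) / p i) [ZMOD (P : ℤ)]) :
    (A : ℝ) / P = Int.fract (- ∑ i, 1 / (p i : ℝ)) :=
  stmt9_general s p τ k M hp hτ hk P hP hM1 A hA hAc
end
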